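/- Suppose for each j ∈ J (J finite), cycle C_j has length L_j, X-indicator x_j, real assignment α_j with X-count bound Σ_j max_s ⟨C_j, α_j^{↺s}⟩^X ≤ R, and each x_j has p_j circularly-consecutive support segments. Let N_j be integers with Σ_j N_j = Σ_j ‖α_j‖₁ and |N_j − ‖α_j‖₁| ≤ 1, and let α̃_j be the pseudo-periodic integer assignment of weight N_j on C_j. Then Σ_j max_s ⟨C_j, α̃_j^{↺s}⟩^X ≤ R + |J| + Σ_j p_j. -/

import Mathlib

/-!
The pseudo-periodic assignment of weight `N` on a cycle of length `L` is the discrete derivative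
of `v ↦ ⌈v N / L⌉`: it equals `N / L` plus the increment of the `L`-periodic error
`E v = ⌈v N / L⌉ - v N / L ∈ [0, 1)`. Summing by parts around the cycle, its `X`-count at any
shift is `(N / L) Σ x` plus at most one unit for each end of a maximal run of `X`s, and every
such end is the end of one of the `p` given segments. Since `N ≤ ‖α‖₁ + 1` and `Σ x ≤ L`,
`(N / L) Σ x` exceeds `‖α‖₁ Σ x / L` by at most `1`, and `‖α‖₁ Σ x / L` is the mean of the
`X`-counts of `α` over all shifts, hence at most their maximum. Summing over the cycles gives
the bound.
-/

/-- The `X`-count at shift `s`: `⟨C, α^{↺s}⟩^X = Σ_{i < L} x i * α ((i - s) mod L)`. -/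
noncomputable def xcount (L : ℕ) (x α : ℕ → ℝ) (s : ℕ) : ℝ :=
  ∑ i ∈ Finset.range L, x i * α ((i + (L - s % L)) % L)

open Classical in
/-- Pseudo-periodic assignment of total weight `N` on a cycle of length `L`. -/
noncomputable def atilde (L N : ℕ) (i : ℕ) : ℝ :=
  if ∃ k < N % L, i = Nat.floor ((L : ℝ) / (N % L : ℕ) * k)
  then ((N / L : ℕ) : ℝ) + 1 else ((N / L : ℕ) : ℝ)

open Finset Function

lemma natFloor_div_eq_iff {θ : ℝ} (hθ : 0 < θ) (k v : ℕ) :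
    ⌊(k : ℝ) / θ⌋₊ = v ↔ v * θ ≤ k ∧ (k : ℝ) < (v + 1) * θ := by
  rw [Nat.floor_eq_iff (by positivity), le_div_iff₀ hθ, div_lt_iff₀ hθ]

lemma ceil_add_one_mul_of_exists {θ : ℝ} (hθ : θ ≤ 1) {v : ℕ}
    (h : ∃ k : ℕ, v * θ ≤ k ∧ (k : ℝ) < (v + 1) * θ) :
    ⌈((v : ℝ) + 1) * θ⌉ = ⌈(v : ℝ) * θ⌉ + 1 := by
  obtain ⟨k, hvk, hk⟩ := h
  have hKk : ⌈(v : ℝ) * θ⌉ ≤ k := Int.ceil_le.2 (by exact_mod_cast hvk)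
  have hK := Int.le_ceil ((v : ℝ) * θ)
  rw [Int.ceil_eq_iff]
  push_cast
  constructor
  · have : (⌈(v : ℝ) * θ⌉ : ℝ) ≤ k := by exact_mod_cast hKk
    linarith
  · linarith

lemma ceil_add_one_mul_of_not_exists {θ : ℝ} (hθ : 0 ≤ θ) {v : ℕ}
    (h : ¬ ∃ k : ℕ, v * θ ≤ k ∧ (k : ℝ) < (v + 1) * θ) :
    ⌈((v : ℝ) + 1) * θ⌉ = ⌈(v : ℝ) * θ⌉ := by
  have hK0 : 0 ≤ ⌈(v : ℝ) * θ⌉ := Int.ceil_nonneg (by positivity)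
  have hK : ((⌈(v : ℝ) * θ⌉.toNat : ℕ) : ℝ) = ⌈(v : ℝ) * θ⌉ := by
    exact_mod_cast Int.toNat_of_nonneg hK0
  have hle : ((v : ℝ) + 1) * θ ≤ ⌈(v : ℝ) * θ⌉ := by
    by_contra hlt
    exact h ⟨_, hK ▸ Int.le_ceil _, hK ▸ not_le.1 hlt⟩
  rw [Int.ceil_eq_iff]
  exact ⟨by linarith [Int.ceil_lt_add_one ((v : ℝ) * θ)], hle⟩

lemma atilde_eq_ceil_sub_ceil {L N v : ℕ} (hv : v < L) :
    atilde L N v = ⌈((v : ℝ) + 1) * (N / L)⌉ - ⌈(v : ℝ) * (N / L)⌉ := by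
  have hL : (0 : ℝ) < L := by exact_mod_cast (Nat.zero_le v).trans_lt hv
  set q := N / L
  set r := N % L
  set θ : ℝ := r / L
  have hN : (N : ℝ) = r + L * q := by exact_mod_cast (Nat.mod_add_div N L).symm
  have hθ0 : 0 ≤ θ := by positivity
  have hθ1 : θ ≤ 1 := (div_le_one hL).2 (by exact_mod_cast (Nat.mod_lt N (by omega)).le)
  have hLθ : L * θ = r := by simp only [θ]; field_simp
  have hfloor (k : ℕ) : (L : ℝ) / (N % L : ℕ) * k = k / θ := by
    simp only [θ, r, div_div_eq_mul_div]; ring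
  have hv' : (v : ℝ) + 1 ≤ L := by exact_mod_cast hv
  have hsplit (w : ℝ) : w * (N / L) = w * θ + w * q := by rw [hN]; simp only [θ]; field_simp
  rw [hsplit, hsplit, show ((v : ℝ) + 1) * q = ((v + 1) * q : ℕ) by push_cast; ring,
    show (v : ℝ) * q = (v * q : ℕ) by push_cast; ring, Int.ceil_add_natCast,
    Int.ceil_add_natCast]
  unfold atilde
  split_ifs with hC
  · obtain ⟨k, hk, rfl⟩ := hC
    have hr : (0 : ℝ) < r := by exact_mod_cast (Nat.zero_le k).trans_lt hk
    rw [ceil_add_one_mul_of_exists hθ1]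
    · push_cast; ring
    exact ⟨k, (natFloor_div_eq_iff (by positivity) k _).1 (by rw [hfloor])⟩
  · rw [ceil_add_one_mul_of_not_exists hθ0]
    · push_cast; ring
    rintro ⟨k, hvk, hk⟩
    have hkr : (k : ℝ) < r := by nlinarith
    have hr : (0 : ℝ) < r := (Nat.cast_nonneg k).trans_lt hkr
    refine hC ⟨k, by exact_mod_cast hkr, ?_⟩
    rw [hfloor]
    exact ((natFloor_div_eq_iff (by positivity) k v).2 ⟨hvk, hk⟩).symm

/-- `ceilExcess t v = ⌈v * t⌉ - v * t`. -/
noncomputable def ceilExcess (t : ℝ) (v : ℕ) : ℝ := Int.fract (-(v * t))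

lemma intCeil_eq_add_ceilExcess (t : ℝ) (v : ℕ) :
    (⌈(v : ℝ) * t⌉ : ℝ) = v * t + ceilExcess t v := by
  rw [ceilExcess, ← Int.self_sub_floor, Int.floor_neg]; push_cast; ring

lemma ceilExcess_periodic {L N : ℕ} (hL : L ≠ 0) : Periodic (ceilExcess ((N : ℝ) / L)) L := by
  intro v
  have : -(((v + L : ℕ) : ℝ) * (N / L)) = -(v * (N / L)) - N := by
    push_cast; field_simp; ring
  rw [ceilExcess, ceilExcess, this, Int.fract_sub_natCast]

lemma atilde_eq_add_ceilExcess {L N v : ℕ} (hv : v < L) :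
    atilde L N v = N / L + ceilExcess ((N : ℝ) / L) (v + 1) - ceilExcess ((N : ℝ) / L) v := by
  have := intCeil_eq_add_ceilExcess ((N : ℝ) / L) (v + 1)
  push_cast at this
  rw [atilde_eq_ceil_sub_ceil hv, this, intCeil_eq_add_ceilExcess]
  ring

lemma sum_range_succ_of_periodic {M : Type*} [AddCancelCommMonoid M] {g : ℕ → M} {L : ℕ}
    (hg : Periodic g L) : ∑ i ∈ range L, g (i + 1) = ∑ i ∈ range L, g i := by
  have h := (sum_range_succ' g L).symm.trans (sum_range_succ g L)
  rwa [← zero_add L, hg 0, zero_add, add_left_inj] at h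

noncomputable def cyclicEnds (L : ℕ) (x : ℕ → ℝ) : Finset ℕ :=
  {i ∈ range L | x i = 1 ∧ x ((i + 1) % L) = 0}

/-- Summation by parts: the sum is `∑ (x i - x (i + 1)) * F (i + 1)`, where only ends of runs
contribute positively. -/
lemma sum_mul_sub_le_card_cyclicEnds {L : ℕ} {x F : ℕ → ℝ} (hx : ∀ i, x i = 0 ∨ x i = 1)
    (hF : Periodic F L) (hF0 : ∀ i, 0 ≤ F i) (hF1 : ∀ i, F i ≤ 1) :
    ∑ i ∈ range L, x i * (F (i + 1) - F i) ≤ #(cyclicEnds L x) := by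
  have hshift : ∑ i ∈ range L, x i * F i = ∑ i ∈ range L, x ((i + 1) % L) * F (i + 1) := by
    have hg : Periodic (fun i => x (i % L) * F i) L := fun i => by simp [hF i]
    rw [sum_range_succ_of_periodic hg]
    exact sum_congr rfl fun i hi => by rw [Nat.mod_eq_of_lt (mem_range.1 hi)]
  calc ∑ i ∈ range L, x i * (F (i + 1) - F i)
      = ∑ i ∈ range L, (x i - x ((i + 1) % L)) * F (i + 1) := by
        simp only [mul_sub, sub_mul, sum_sub_distrib, hshift]
    _ ≤ ∑ i ∈ range L, if x i = 1 ∧ x ((i + 1) % L) = 0 then 1 else 0 := by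
        refine sum_le_sum fun i _ => ?_
        rcases hx i with h | h <;> rcases hx ((i + 1) % L) with h' | h' <;>
          simp [h, h', hF0, hF1]
    _ = #(cyclicEnds L x) := by rw [cyclicEnds, natCast_card_filter]

lemma card_cyclicEnds_le {L : ℕ} {x : ℕ → ℝ} {p : ℕ} {start len : ℕ → ℕ}
    (hsupp : ∀ i < L, (x i = 1 ↔ ∃ k < p, ∃ t < len k, i = (start k + t) % L)) :
    #(cyclicEnds L x) ≤ p := by
  have hsub : cyclicEnds L x ⊆ (range p).image fun k => (start k + (len k - 1)) % L := by
    intro i hi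
    simp only [cyclicEnds, mem_filter, mem_range] at hi
    obtain ⟨hiL, hxi, hxi'⟩ := hi
    obtain ⟨k, hk, t, ht, rfl⟩ := (hsupp _ hiL).1 hxi
    refine mem_image.2 ⟨k, mem_range.2 hk, ?_⟩
    by_contra hne
    have hlast : t + 1 < len k := by
      by_contra h
      exact hne (by rw [show len k - 1 = t by omega])
    have hsucc : x ((start k + (t + 1)) % L) = 1 :=
      (hsupp _ (Nat.mod_lt _ (by omega))).2 ⟨k, hk, t + 1, hlast, rfl⟩
    rw [Nat.mod_add_mod, add_assoc, hsucc] at hxi'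
    exact one_ne_zero hxi'
  simpa using (card_le_card hsub).trans card_image_le

lemma xcount_atilde_le {L N p : ℕ} (hL : 0 < L) {x : ℕ → ℝ} (hx : ∀ i, x i = 0 ∨ x i = 1)
    {start len : ℕ → ℕ}
    (hsupp : ∀ i < L, (x i = 1 ↔ ∃ k < p, ∃ t < len k, i = (start k + t) % L)) (s : ℕ) :
    xcount L x (atilde L N) s ≤ (∑ i ∈ range L, x i) * (N / L) + p := by
  set F : ℕ → ℝ := fun i => ceilExcess (N / L) (i + (L - s % L))
  have hE := ceilExcess_periodic (N := N) hL.ne'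
  have hF : Periodic F L := fun i => by simp only [F, add_right_comm i L, hE _]
  have hterm (i : ℕ) : atilde L N ((i + (L - s % L)) % L) = N / L + (F (i + 1) - F i) := by
    rw [atilde_eq_add_ceilExcess (Nat.mod_lt _ hL), ← hE.map_mod_nat ((i + (L - s % L)) % L + 1),
      Nat.mod_add_mod, hE.map_mod_nat, hE.map_mod_nat, add_right_comm]
    ring
  calc xcount L x (atilde L N) s
      = (∑ i ∈ range L, x i) * (N / L) + ∑ i ∈ range L, x i * (F (i + 1) - F i) := by
        rw [xcount, sum_mul, ← sum_add_distrib]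
        exact sum_congr rfl fun i _ => by rw [hterm, mul_add]
    _ ≤ (∑ i ∈ range L, x i) * (N / L) + #(cyclicEnds L x) := by
        gcongr
        exact sum_mul_sub_le_card_cyclicEnds hx hF (fun _ => Int.fract_nonneg _)
          (fun _ => (Int.fract_lt_one _).le)
    _ ≤ (∑ i ∈ range L, x i) * (N / L) + p := by
        gcongr
        exact_mod_cast card_cyclicEnds_le hsupp

lemma sum_range_sub_mod {M : Type*} [AddCommMonoid M] {L i : ℕ} (hi : i < L) (f : ℕ → M) :
    ∑ s ∈ range L, f ((i + (L - s % L)) % L) = ∑ t ∈ range L, f t := by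
  have : NeZero L := ⟨by omega⟩
  rw [sum_range, sum_range, ← (Equiv.subLeft (⟨i, hi⟩ : Fin L)).sum_comp (fun t => f t)]
  refine Fintype.sum_congr _ _ fun s => ?_
  rw [Equiv.subLeft_apply, Fin.val_sub, Nat.mod_eq_of_lt s.isLt, add_comm]

lemma sum_range_xcount (L : ℕ) (x α : ℕ → ℝ) :
    ∑ s ∈ range L, xcount L x α s = (∑ i ∈ range L, x i) * ∑ t ∈ range L, α t := by
  simp only [xcount]
  rw [sum_comm, sum_mul]
  exact sum_congr rfl fun i hi => by rw [← mul_sum, sum_range_sub_mod (mem_range.1 hi)]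

lemma xcount_periodic (L : ℕ) (x α : ℕ → ℝ) : Periodic (xcount L x α) L := fun s => by
  simp only [xcount, Nat.add_mod_right]

lemma bddAbove_range_xcount {L : ℕ} (hL : 0 < L) (x α : ℕ → ℝ) :
    BddAbove (Set.range (xcount L x α)) := by
  refine ((range L).image (xcount L x α)).bddAbove.mono ?_
  rintro _ ⟨s, rfl⟩
  rw [← (xcount_periodic L x α).map_mod_nat]
  exact mem_coe.2 (mem_image_of_mem _ (mem_range.2 (Nat.mod_lt _ hL)))

lemma sum_mul_sum_div_le_iSup_xcount {L : ℕ} (hL : 0 < L) (x α : ℕ → ℝ) :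
    (∑ i ∈ range L, x i) * (∑ t ∈ range L, α t) / L ≤ ⨆ s, xcount L x α s := by
  rw [div_le_iff₀ (by exact_mod_cast hL), ← sum_range_xcount, mul_comm]
  simpa using sum_le_card_nsmul (range L) (xcount L x α) _
    fun s _ => le_ciSup (bddAbove_range_xcount hL x α) s

lemma iSup_xcount_atilde_le {L N p : ℕ} (hL : 0 < L) {x : ℕ → ℝ} (hx : ∀ i, x i = 0 ∨ x i = 1)
    {start len : ℕ → ℕ}
    (hsupp : ∀ i < L, (x i = 1 ↔ ∃ k < p, ∃ t < len k, i = (start k + t) % L))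
    {α : ℕ → ℝ} (hN : (N : ℝ) ≤ ∑ t ∈ range L, α t + 1) :
    ⨆ s, xcount L x (atilde L N) s ≤ (⨆ s, xcount L x α s) + 1 + p := by
  have hL' : (0 : ℝ) < L := by exact_mod_cast hL
  have hx01 (i : ℕ) : 0 ≤ x i ∧ x i ≤ 1 := by rcases hx i with h | h <;> simp [h]
  have hm0 : 0 ≤ ∑ i ∈ range L, x i := sum_nonneg fun i _ => (hx01 i).1
  have hmL : ∑ i ∈ range L, x i ≤ L := by
    simpa using sum_le_card_nsmul (range L) x 1 fun i _ => (hx01 i).2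
  have havg := sum_mul_sum_div_le_iSup_xcount hL x α
  refine ciSup_le fun s => (xcount_atilde_le hL hx hsupp s).trans ?_
  calc (∑ i ∈ range L, x i) * (N / L) + p
      ≤ (∑ i ∈ range L, x i) * ((∑ t ∈ range L, α t + 1) / L) + p := by gcongr
    _ = (∑ i ∈ range L, x i) * (∑ t ∈ range L, α t) / L + (∑ i ∈ range L, x i) / L + p := by
        ring
    _ ≤ (⨆ s, xcount L x α s) + 1 + p := by
        gcongr
        exact (div_le_one hL').2 hmL

theorem rounding_bounds_general (J : Type*) [Fintype J]
    (L : J → ℕ) (hL : ∀ j, 0 < L j)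
    (x : J → ℕ → ℝ) (hx : ∀ j i, x j i = 0 ∨ x j i = 1)
    (α : J → ℕ → ℝ)
    (p : J → ℕ) (start len : J → ℕ → ℕ)
    (hsupp : ∀ j, ∀ i < L j,
      (x j i = 1 ↔ ∃ k < p j, ∃ t < len j k, i = (start j k + t) % L j))
    (R : ℝ)
    (hcount : ∑ j, (⨆ s : ℕ, xcount (L j) (x j) (α j) s) ≤ R)
    (N : J → ℕ)
    (hNclose : ∀ j, |(N j : ℝ) - ∑ i ∈ Finset.range (L j), α j i| ≤ 1) :
    ∑ j, (⨆ s : ℕ, xcount (L j) (x j) (atilde (L j) (N j)) s)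
      ≤ R + (Fintype.card J : ℝ) + ∑ j, (p j : ℝ) := by
  have hcycle (j : J) : ⨆ s, xcount (L j) (x j) (atilde (L j) (N j)) s
      ≤ (⨆ s, xcount (L j) (x j) (α j) s) + 1 + p j :=
    iSup_xcount_atilde_le (hL j) (hx j) (hsupp j) (by linarith [(abs_le.1 (hNclose j)).2])
  calc ∑ j, (⨆ s, xcount (L j) (x j) (atilde (L j) (N j)) s)
      ≤ ∑ j, ((⨆ s, xcount (L j) (x j) (α j) s) + 1 + p j) := sum_le_sum fun j _ => hcycle j
    _ ≤ R + Fintype.card J + ∑ j, (p j : ℝ) := by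
        simp only [sum_add_distrib, sum_const, card_univ, nsmul_eq_mul, mul_one]
        linarith

theorem rounding_bounds (J : Type*) [Fintype J]
    (L : J → ℕ) (hL : ∀ j, 0 < L j)
    (x : J → ℕ → ℝ) (hx : ∀ j i, x j i = 0 ∨ x j i = 1)
    (α : J → ℕ → ℝ) (hα : ∀ j i, 0 ≤ α j i)
    (p : J → ℕ) (start len : J → ℕ → ℕ)
    (hsupp : ∀ j, ∀ i < L j,
      (x j i = 1 ↔ ∃ k < p j, ∃ t < len j k, i = (start j k + t) % L j))
    (R : ℝ)
    (hcount : ∑ j, (⨆ s : ℕ, xcount (L j) (x j) (α j) s) ≤ R)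
    (N : J → ℕ)
    (hN : (∑ j, (N j : ℝ)) = ∑ j, ∑ i ∈ Finset.range (L j), α j i)
    (hNclose : ∀ j, |(N j : ℝ) - ∑ i ∈ Finset.range (L j), α j i| ≤ 1) :
    ∑ j, (⨆ s : ℕ, xcount (L j) (x j) (atilde (L j) (N j)) s)
      ≤ R + (Fintype.card J : ℝ) + ∑ j, (p j : ℝ) :=
  rounding_bounds_general J L hL x hx α p start len hsupp R hcount N hNclose
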